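/- Let R be finite, u an upper bound function, and M_u the merge plan with merge_{M_u}(x,y) = min over x-y paths of max of u over edges. Then the minimum spanning tree cost of the complete graph on R with respect to the edge costs {x,y} ↦ merge_{M_u}(x,y) equals the minimum spanning tree cost with respect to u, and both equal value(M_u). -/

import Mathlib

/-! For `t > 0` the partition of `M_u` at time `t` is the partition of `R` into the connected
components of the threshold graph `G_t` whose edges are the `e` with `u e < t`, so
`value M_u = ∫₀^∞ (c(G_t) - 1) dt`, where `c` counts components.

Kruskal's algorithm gives a spanning tree `T` whose edges of cost `< t` span the components of
every `G_t`; hence `c(G_t) - 1 = #{e ∈ T | t ≤ u e}`, and integrating over `t` gives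
`value M_u = ∑_{e ∈ T} u e`. Conversely, a connected edge set `T'` contains at least `c(G_t) - 1`
edges joining distinct components of `G_t`, and both the `u`-cost and the merge time of such an
edge are `≥ t`; integrating again bounds both costs of `T'` below by `value M_u`. -/

/-- A merge plan on a terminal set `R`: a family of partitions of `R`
(given as setoids, one for each time `t : ℝ`) such that two distinct
terminals `x, y` lie in different parts of the partition at time `t`
if and only if `0 ≤ t ≤ mergeTime x y`. -/
structure MergePlan (R : Type*) where
  rel : ℝ → Setoid R
  mergeTime : R → R → ℝ
  mergeTime_self : ∀ x : R, mergeTime x x = 0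
  mergeTime_nonneg : ∀ x y : R, x ≠ y → 0 ≤ mergeTime x y
  rel_iff : ∀ (t : ℝ) (x y : R), x ≠ y →
    (¬ (rel t).r x y ↔ 0 ≤ t ∧ t ≤ mergeTime x y)

/-- The local value of a merge plan for a terminal set `X`:
`∫_0^∞ (|{parts meeting X}| - 1) dt`. -/
noncomputable def MergePlan.localValue {R : Type*} (M : MergePlan R) (X : Set R) : ℝ :=
  ∫ t in Set.Ioi (0 : ℝ),
    ((Set.ncard (Quotient.mk (M.rel t) '' X) : ℝ) - 1)

/-- The value of a merge plan: `∫_0^∞ (|S^t| - 1) dt`. -/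
noncomputable def MergePlan.value {R : Type*} (M : MergePlan R) : ℝ :=
  M.localValue Set.univ
/-- `minimax u x y` is the minimum over `x`-`y` paths `P` in the complete graph on `R`
of the maximum of `u` over the edges of `P`. Paths are encoded as lists of vertices with
distinct consecutive entries. -/
noncomputable def minimax {R : Type*} (u : Sym2 R → ℝ) (x y : R) : ℝ :=
  sInf {m : ℝ | ∃ l : List R,
    List.Chain' (fun a b => a ≠ b) (x :: l) ∧
    (x :: l).getLast (List.cons_ne_nil x l) = y ∧
    m = (((x :: l).zip l).map fun p => u s(p.1, p.2)).foldr max 0}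
/-- The minimum cost of a spanning tree of the complete graph on `R`
with respect to the edge costs `u`. -/
noncomputable def mstCost {R : Type*} (u : Sym2 R → ℝ) : ℝ :=
  sInf {w : ℝ | ∃ T : Finset (Sym2 R), (∀ e ∈ T, ¬ e.IsDiag) ∧
    (SimpleGraph.fromEdgeSet (↑T : Set (Sym2 R))).Connected ∧
    T.card + 1 = Nat.card R ∧ w = ∑ e ∈ T, u e}

open Finset MeasureTheory

namespace SimpleGraph

variable {V : Type*}

lemma reachable_le_of_forall_adj {G H : SimpleGraph V} (h : ∀ a b, G.Adj a b → H.Reachable a b) :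
    G.Reachable ≤ H.Reachable := by
  rintro a b ⟨p⟩
  induction p with
  | nil => rfl
  | cons hadj _ ih => exact (h _ _ hadj).trans ih

lemma Reachable.of_sup_edge {G : SimpleGraph V} {x y a b : V}
    (h : (G ⊔ edge x y).Reachable a b) :
    G.Reachable a b ∨
      (G.Reachable a x ∨ G.Reachable a y) ∧ (G.Reachable b x ∨ G.Reachable b y) := by
  obtain ⟨p⟩ := h
  induction p with
  | nil => exact Or.inl .rfl
  | @cons _ _ w hadj _ ih =>
    rcases (sup_adj _ _ _ _).1 hadj with hG | hxy
    · have hac := hG.reachable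
      exact ih.imp hac.trans (And.imp_left (Or.imp hac.trans hac.trans))
    · obtain ⟨hac, -⟩ := (edge_adj _ _ _ _).1 hxy
      have hb : G.Reachable w x ∨ G.Reachable w y := by
        rcases ih with hcb | ⟨-, hb⟩
        · rcases hac with ⟨-, rfl⟩ | ⟨-, rfl⟩
          · exact Or.inr hcb.symm
          · exact Or.inl hcb.symm
        · exact hb
      rcases hac with ⟨rfl, -⟩ | ⟨rfl, -⟩
      · exact Or.inr ⟨Or.inl .rfl, hb⟩
      · exact Or.inr ⟨Or.inr .rfl, hb⟩

lemma card_connectedComponent_le_sup_edge_add_one [Finite V] (G : SimpleGraph V) (x y : V) :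
    Nat.card G.ConnectedComponent ≤ Nat.card (G ⊔ edge x y).ConnectedComponent + 1 := by
  set f := ConnectedComponent.map (Hom.ofLE (le_sup_left : G ≤ G ⊔ edge x y))
  have hinj : Set.InjOn f {G.connectedComponentMk y}ᶜ := by
    intro c₁ h₁ c₂ h₂ h
    induction c₁ using ConnectedComponent.ind with | h a =>
    induction c₂ using ConnectedComponent.ind with | h b =>
    simp only [Set.mem_compl_iff, Set.mem_singleton_iff, ConnectedComponent.eq] at h₁ h₂
    simp only [f, ConnectedComponent.map_mk, Hom.coe_ofLE, id, ConnectedComponent.eq] at h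
    refine ConnectedComponent.eq.2 ?_
    rcases Reachable.of_sup_edge h with hab | ⟨ha | ha, hb | hb⟩
    exacts [hab, ha.trans hb.symm, (h₂ hb).elim, (h₁ ha).elim, (h₁ ha).elim]
  calc Nat.card G.ConnectedComponent
      = ({G.connectedComponentMk y}ᶜ : Set _).ncard + 1 := by
        rw [Set.compl_eq_univ_sdiff, Set.ncard_sdiff_singleton_add_one (Set.mem_univ _),
          Set.ncard_univ]
    _ ≤ (Set.univ : Set (G ⊔ edge x y).ConnectedComponent).ncard + 1 := by
        gcongr
        exact Set.ncard_le_ncard_of_injOn f (fun _ _ => Set.mem_univ _) hinj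
    _ = Nat.card (G ⊔ edge x y).ConnectedComponent + 1 := by rw [Set.ncard_univ]

lemma card_connectedComponent_le_sup_fromEdgeSet_add_card [Finite V] (G : SimpleGraph V)
    (C : Finset (Sym2 V)) :
    Nat.card G.ConnectedComponent ≤ Nat.card (G ⊔ fromEdgeSet C).ConnectedComponent + #C := by
  classical
  induction C using Finset.induction_on with
  | empty => simp
  | insert e C he ih =>
    induction e using Sym2.ind with | _ x y =>
    have hsup : G ⊔ fromEdgeSet ↑(insert s(x, y) C) = G ⊔ fromEdgeSet ↑C ⊔ edge x y := by
      rw [coe_insert, Set.insert_eq, fromEdgeSet_union, edge, sup_assoc, sup_comm (fromEdgeSet _)]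
    rw [card_insert_of_notMem he, hsup]
    have := card_connectedComponent_le_sup_edge_add_one (G ⊔ fromEdgeSet C) x y
    omega

lemma card_connectedComponent_le_of_reachable_le [Finite V] {H H' : SimpleGraph V}
    (h : H.Reachable ≤ H'.Reachable) :
    Nat.card H'.ConnectedComponent ≤ Nat.card H.ConnectedComponent :=
  Nat.card_le_card_of_surjective (Quot.map id h) (Quot.ind fun v => ⟨Quot.mk _ v, rfl⟩)

lemma card_connectedComponent_le_add_card [Finite V] {G H : SimpleGraph V} {C : Finset (Sym2 V)}
    (h : H.Reachable ≤ (G ⊔ fromEdgeSet C).Reachable) :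
    Nat.card G.ConnectedComponent ≤ Nat.card H.ConnectedComponent + #C :=
  (card_connectedComponent_le_sup_fromEdgeSet_add_card G C).trans
    (Nat.add_le_add_right (card_connectedComponent_le_of_reachable_le h) _)

lemma card_connectedComponent_bot : Nat.card (⊥ : SimpleGraph V).ConnectedComponent = Nat.card V :=
  (Nat.card_eq_of_bijective _ ⟨fun _ _ h => reachable_bot.1 (ConnectedComponent.eq.1 h),
    Quot.mk_surjective⟩).symm

lemma Connected.card_connectedComponent {G : SimpleGraph V} (hG : G.Connected) :
    Nat.card G.ConnectedComponent = 1 :=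
  Nat.card_eq_one_iff_unique.2
    ⟨hG.preconnected.subsingleton_connectedComponent, ⟨G.connectedComponentMk hG.nonempty.some⟩⟩

lemma card_connectedComponent_le_card_filter_add_one [Finite V] {G : SimpleGraph V}
    {T : Finset (Sym2 V)} (hT : (fromEdgeSet (T : Set (Sym2 V))).Connected) (v : Sym2 V → ℝ)
    (t : ℝ) (hv : ∀ a b, a ≠ b → s(a, b) ∈ T → v s(a, b) < t → G.Reachable a b) :
    Nat.card G.ConnectedComponent ≤ #{e ∈ T | t ≤ v e} + 1 := by
  rw [← hT.card_connectedComponent, add_comm]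
  refine card_connectedComponent_le_add_card (reachable_le_of_forall_adj fun a b hab => ?_)
  obtain ⟨haT, hne⟩ := (fromEdgeSet_adj _).1 hab
  by_cases hvt : v s(a, b) < t
  · exact (hv a b hne haT hvt).mono le_sup_left
  · refine Adj.reachable (Or.inr ((fromEdgeSet_adj _).2 ⟨?_, hne⟩))
    simpa using ⟨haT, not_lt.1 hvt⟩

lemma card_le_card_connectedComponent_add_card [Finite V] {G : SimpleGraph V}
    {E : Finset (Sym2 V)} (h : G.Reachable ≤ (fromEdgeSet (E : Set (Sym2 V))).Reachable) :
    Nat.card V ≤ Nat.card G.ConnectedComponent + #E := by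
  rw [← card_connectedComponent_bot]
  exact card_connectedComponent_le_add_card (by rwa [bot_sup_eq])

theorem exists_isAcyclic_forall_reachable_le_inf_of_finset {ι : Type*} [LinearOrder ι]
    {G : ι → SimpleGraph V} (hG : Monotone G) (S : Finset ι) :
    ∃ F : SimpleGraph V, F.IsAcyclic ∧ (∀ i, (∀ s ∈ S, s ≤ i) → F ≤ G i) ∧
      ∀ s ∈ S, (G s).Reachable ≤ (F ⊓ G s).Reachable := by
  -- Kruskal: grow the forest into a spanning forest of each `G s`, in increasing order of `s`.
  classical
  induction S using Finset.induction_on_max with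
  | empty => exact ⟨⊥, isAcyclic_bot, fun _ _ => bot_le, by simp⟩
  | insert a S haS ih =>
    obtain ⟨F, hF, hFle, hreach⟩ := ih
    obtain ⟨F', hFF', hF'le, hF', hF'reach⟩ :=
      exists_isAcyclic_reachable_eq_le_of_le_of_isAcyclic (hFle a fun s hs => (haS s hs).le) hF
    refine ⟨F', hF', fun i hi => hF'le.trans (hG (hi a (mem_insert_self a S))), ?_⟩
    intro s hs
    rcases mem_insert.1 hs with rfl | hs
    · rw [inf_eq_left.2 hF'le, hF'reach]
    · exact (hreach s hs).trans (Reachable.mono' (inf_le_inf_right _ hFF'))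

theorem exists_isAcyclic_forall_reachable_le_inf [Finite V] {ι : Type*} [LinearOrder ι]
    {G : ι → SimpleGraph V} (hG : Monotone G) :
    ∃ F : SimpleGraph V, F.IsAcyclic ∧ ∀ i, (G i).Reachable ≤ (F ⊓ G i).Reachable := by
  -- `G` takes only finitely many values, `SimpleGraph V` being finite.
  obtain ⟨S, -, hS, hSG⟩ := Set.exists_subset_image_finite_and (p := (· = Set.range G)).1
    ⟨Set.range G, by rw [Set.image_univ], Set.toFinite _, rfl⟩
  obtain ⟨F, hF, -, hreach⟩ := exists_isAcyclic_forall_reachable_le_inf_of_finset hG hS.toFinset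
  refine ⟨F, hF, fun i => ?_⟩
  obtain ⟨s, hs, hsi⟩ : G i ∈ G '' S := hSG ▸ Set.mem_range_self i
  exact hsi ▸ hreach s (hS.mem_toFinset.2 hs)

end SimpleGraph

open SimpleGraph

section

variable {V : Type*}

def thresholdGraph (u : Sym2 V → ℝ) (t : ℝ) : SimpleGraph V := fromEdgeSet {e | u e < t}

lemma thresholdGraph_adj {u : Sym2 V → ℝ} {t : ℝ} {a b : V} :
    (thresholdGraph u t).Adj a b ↔ u s(a, b) < t ∧ a ≠ b :=
  fromEdgeSet_adj _

lemma thresholdGraph_monotone (u : Sym2 V → ℝ) : Monotone (thresholdGraph u) :=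
  fun _ _ hst => fromEdgeSet_mono fun _ he => lt_of_lt_of_le he hst

lemma exists_isTree_forall_reachable_le_inf_thresholdGraph [Finite V] [Nonempty V]
    (u : Sym2 V → ℝ) : ∃ F : SimpleGraph V, F.IsTree ∧
      ∀ t, (thresholdGraph u t).Reachable ≤ (F ⊓ thresholdGraph u t).Reachable := by
  obtain ⟨F, hF, hreach⟩ := exists_isAcyclic_forall_reachable_le_inf (thresholdGraph_monotone u)
  refine ⟨F, ⟨⟨fun a b => ?_⟩, hF⟩, hreach⟩
  rcases eq_or_ne a b with rfl | hab
  · rfl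
  have hadj : (thresholdGraph u (u s(a, b) + 1)).Adj a b := thresholdGraph_adj.2 ⟨by linarith, hab⟩
  exact (hreach _ a b hadj.reachable).mono inf_le_left

def IsSpanningTree (T : Finset (Sym2 V)) : Prop :=
  (∀ e ∈ T, ¬ e.IsDiag) ∧ (fromEdgeSet (T : Set (Sym2 V))).Connected ∧ #T + 1 = Nat.card V

lemma exists_isSpanningTree_card_connectedComponent_thresholdGraph [Finite V] [Nonempty V]
    (u : Sym2 V → ℝ) : ∃ T : Finset (Sym2 V), IsSpanningTree T ∧
      ∀ t, Nat.card (thresholdGraph u t).ConnectedComponent = #{e ∈ T | t ≤ u e} + 1 := by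
  classical
  have := Fintype.ofFinite V
  obtain ⟨F, hF, hreach⟩ := exists_isTree_forall_reachable_le_inf_thresholdGraph u
  have hFT : fromEdgeSet (F.edgeFinset : Set (Sym2 V)) = F := by simp
  have hcard : #F.edgeFinset + 1 = Nat.card V := by
    rw [Nat.card_eq_fintype_card]; exact hF.card_edgeFinset
  refine ⟨F.edgeFinset, ⟨fun e he => F.not_isDiag_of_mem_edgeSet (mem_edgeFinset.1 he),
    by rw [hFT]; exact hF.connected, hcard⟩, fun t => le_antisymm ?_ ?_⟩
  · exact card_connectedComponent_le_card_filter_add_one (by rw [hFT]; exact hF.connected) u t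
      fun a b hab _ hut => (thresholdGraph_adj.2 ⟨hut, hab⟩).reachable
  · have hsub : F ⊓ thresholdGraph u t ≤ fromEdgeSet ↑{e ∈ F.edgeFinset | ¬ t ≤ u e} := by
      intro a b hab
      simp_all [thresholdGraph_adj]
    have hle := card_le_card_connectedComponent_add_card ((hreach t).trans (Reachable.mono' hsub))
    have hsplit := card_filter_add_card_filter_not (s := F.edgeFinset) (fun e => t ≤ u e)
    omega

lemma isChain_thresholdGraph_adj_cons_iff {u : Sym2 V → ℝ} {t : ℝ} (ht : 0 < t) (x : V)
    (l : List V) : (x :: l).IsChain (thresholdGraph u t).Adj ↔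
      (x :: l).IsChain (fun a b => a ≠ b) ∧
        (((x :: l).zip l).map fun p => u s(p.1, p.2)).foldr max 0 < t := by
  -- `0 < t` is needed because the path maximum is seeded with `0`.
  induction l generalizing x with
  | nil => simp [ht]
  | cons a l ih =>
    simp only [List.isChain_cons_cons, ih, thresholdGraph_adj, List.zip_cons_cons, List.map_cons,
      List.foldr_cons, max_lt_iff]
    tauto

lemma minimax_lt_iff_reachable {u : Sym2 V → ℝ} {t : ℝ} (ht : 0 < t) {x y : V} :
    minimax u x y < t ↔ (thresholdGraph u t).Reachable x y := by
  unfold minimax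
  rw [csInf_lt_iff, reachable_iff_reflTransGen]
  · constructor
    · rintro ⟨_, ⟨l, hl, hlast, rfl⟩, hlt⟩
      exact List.relationReflTransGen_of_exists_isChain_cons l
        ((isChain_thresholdGraph_adj_cons_iff ht x l).2 ⟨hl, hlt⟩) hlast
    · intro h
      obtain ⟨l, hl, hlast⟩ := List.exists_isChain_cons_of_relationReflTransGen h
      obtain ⟨hl, hlt⟩ := (isChain_thresholdGraph_adj_cons_iff ht x l).1 hl
      exact ⟨_, ⟨l, hl, hlast, rfl⟩, hlt⟩
  · refine ⟨0, ?_⟩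
    rintro _ ⟨l, -, -, rfl⟩
    induction ((x :: l).zip l).map fun p => u s(p.1, p.2) with
    | nil => exact le_rfl
    | cons a L ih => exact ih.trans (le_max_right _ _)
  · rcases eq_or_ne x y with rfl | hxy
    · exact ⟨_, [], .singleton x, rfl, rfl⟩
    · exact ⟨_, [y], List.isChain_pair.2 hxy, rfl, rfl⟩

lemma minimax_le_apply {u : Sym2 V → ℝ} (hu : ∀ e, 0 ≤ u e) {x y : V} (hxy : x ≠ y) :
    minimax u x y ≤ u s(x, y) :=
  le_of_forall_gt_imp_ge_of_dense fun _ hc =>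
    ((minimax_lt_iff_reachable ((hu _).trans_lt hc)).2
      (thresholdGraph_adj.2 ⟨hc, hxy⟩).reachable).le

section LayerCake

variable {ι : Type*} {s : Finset ι} {f : ι → ℝ}

lemma card_filter_le_eqOn_sum_indicator :
    Set.EqOn (fun t => (#{i ∈ s | t ≤ f i} : ℝ))
      (fun t => ∑ i ∈ s, (Set.Ioc 0 (f i)).indicator 1 t) (Set.Ioi 0) := by
  intro t ht
  simp only [natCast_card_filter, Set.indicator_apply, Set.mem_Ioc, Set.mem_Ioi.1 ht, true_and,
    Pi.one_apply]

lemma integrable_indicator_Ioc_one (c : ℝ) : Integrable ((Set.Ioc 0 c).indicator (1 : ℝ → ℝ)) :=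
  (integrable_indicator_iff measurableSet_Ioc).2 (integrableOn_const measure_Ioc_lt_top.ne)

lemma integrableOn_card_filter_le :
    IntegrableOn (fun t => (#{i ∈ s | t ≤ f i} : ℝ)) (Set.Ioi 0) :=
  IntegrableOn.congr_fun
    (integrable_finsetSum _ fun i _ => (integrable_indicator_Ioc_one (f i)).integrableOn)
    card_filter_le_eqOn_sum_indicator.symm measurableSet_Ioi

lemma integral_card_filter_le (hf : ∀ i ∈ s, 0 ≤ f i) :
    ∫ t in Set.Ioi 0, (#{i ∈ s | t ≤ f i} : ℝ) = ∑ i ∈ s, f i := by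
  rw [setIntegral_congr_fun measurableSet_Ioi card_filter_le_eqOn_sum_indicator,
    integral_finsetSum _ fun i _ => (integrable_indicator_Ioc_one (f i)).integrableOn]
  refine sum_congr rfl fun i hi => ?_
  rw [integral_indicator_one measurableSet_Ioc, measureReal_restrict_apply measurableSet_Ioc,
    Set.inter_eq_left.2 Set.Ioc_subset_Ioi_self, Real.volume_real_Ioc_of_le (hf i hi), sub_zero]

lemma sum_le_sum_of_card_filter_le {κ : Type*} {s' : Finset κ} {g : κ → ℝ}
    (hf : ∀ i ∈ s, 0 ≤ f i) (hg : ∀ j ∈ s', 0 ≤ g j)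
    (h : ∀ t > 0, #{i ∈ s | t ≤ f i} ≤ #{j ∈ s' | t ≤ g j}) :
    ∑ i ∈ s, f i ≤ ∑ j ∈ s', g j := by
  rw [← integral_card_filter_le hf, ← integral_card_filter_le hg]
  exact setIntegral_mono_on integrableOn_card_filter_le integrableOn_card_filter_le
    measurableSet_Ioi fun t ht => by exact_mod_cast h t ht

end LayerCake

lemma sum_le_sum_of_card_connectedComponent_eq [Finite V] {G : ℝ → SimpleGraph V}
    {u v : Sym2 V → ℝ} {T T' : Finset (Sym2 V)}
    (hcount : ∀ t, Nat.card (G t).ConnectedComponent = #{e ∈ T | t ≤ u e} + 1)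
    (hu : ∀ e ∈ T, 0 ≤ u e) (hT' : (fromEdgeSet (T' : Set (Sym2 V))).Connected)
    (hv : ∀ e ∈ T', 0 ≤ v e)
    (hvt : ∀ t > 0, ∀ a b, a ≠ b → s(a, b) ∈ T' → v s(a, b) < t → (G t).Reachable a b) :
    ∑ e ∈ T, u e ≤ ∑ e ∈ T', v e := by
  refine sum_le_sum_of_card_filter_le hu hv fun t ht => ?_
  have := card_connectedComponent_le_card_filter_add_one hT' v t (hvt t ht)
  rw [hcount] at this
  omega

lemma MergePlan.rel_eq_reachableSetoid (M : MergePlan V) (G : SimpleGraph V) {t : ℝ} (ht : 0 < t)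
    (hG : ∀ x y, x ≠ y → (M.mergeTime x y < t ↔ G.Reachable x y)) :
    M.rel t = G.reachableSetoid := by
  ext x y
  rcases eq_or_ne x y with rfl | hxy
  · exact iff_of_true ((M.rel t).refl x) .rfl
  · change (M.rel t) x y ↔ G.Reachable x y
    rw [← hG x y hxy, ← not_le, ← not_iff_not, not_not, M.rel_iff t x y hxy, and_iff_right ht.le]

lemma MergePlan.value_eq_integral_card_connectedComponent (M : MergePlan V)
    (G : ℝ → SimpleGraph V)
    (hG : ∀ t > 0, ∀ x y, x ≠ y → (M.mergeTime x y < t ↔ (G t).Reachable x y)) :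
    M.value = ∫ t in Set.Ioi 0, ((Nat.card (G t).ConnectedComponent : ℝ) - 1) := by
  refine setIntegral_congr_fun measurableSet_Ioi fun t ht => ?_
  rw [Set.image_univ_of_surjective Quotient.mk_surjective, Set.ncard_univ,
    M.rel_eq_reachableSetoid (G t) ht (hG t ht)]
  rfl

lemma mstCost_eq_of_isSpanningTree {u : Sym2 V → ℝ} {a : ℝ} {T : Finset (Sym2 V)}
    (hT : IsSpanningTree T) (hTa : ∑ e ∈ T, u e ≤ a)
    (ha : ∀ T', IsSpanningTree T' → a ≤ ∑ e ∈ T', u e) : mstCost u = a := by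
  refine IsLeast.csInf_eq ⟨?_, ?_⟩
  · obtain ⟨hdiag, hconn, hcard⟩ := hT
    exact ⟨T, hdiag, hconn, hcard, le_antisymm (ha T ⟨hdiag, hconn, hcard⟩) hTa⟩
  · rintro _ ⟨T', hdiag, hconn, hcard, rfl⟩
    exact ha T' ⟨hdiag, hconn, hcard⟩

end

/-- For the merge plan `M_u` whose merge times are the min-max bound
determined by `u`, the minimum spanning tree cost of the complete graph on `R` with
respect to the merge times of `M_u` equals the minimum spanning tree cost with respect
to `u`, and both equal the value of `M_u`. -/
theorem mstCost_mergeTimes_eq_mstCost {R : Type*} [Fintype R] [Nonempty R]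
    (u : Sym2 R → ℝ) (hu : ∀ e, 0 ≤ u e)
    (M : MergePlan R)
    (hM : ∀ x y : R, x ≠ y → M.mergeTime x y = minimax u x y)
    (m : Sym2 R → ℝ)
    (hm : ∀ x y : R, x ≠ y → m s(x, y) = M.mergeTime x y) :
    mstCost m = mstCost u ∧ mstCost u = M.value := by
  have hreach : ∀ t > 0, ∀ x y, x ≠ y →
      (M.mergeTime x y < t ↔ (thresholdGraph u t).Reachable x y) :=
    fun t ht x y hxy => hM x y hxy ▸ minimax_lt_iff_reachable ht
  obtain ⟨T, hT, hcount⟩ := exists_isSpanningTree_card_connectedComponent_thresholdGraph u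
  have hvalue : M.value = ∑ e ∈ T, u e := by
    rw [M.value_eq_integral_card_connectedComponent _ hreach,
      ← integral_card_filter_le fun e _ => hu e]
    simp only [hcount, Nat.cast_add, Nat.cast_one, add_sub_cancel_right]
  have hm_le : ∀ e, ¬ e.IsDiag → 0 ≤ m e ∧ m e ≤ u e := by
    refine Sym2.ind fun a b hab => ?_
    have hab : a ≠ b := fun h => hab (Sym2.mk_isDiag_iff.2 h)
    rw [hm a b hab]
    exact ⟨M.mergeTime_nonneg a b hab, hM a b hab ▸ minimax_le_apply hu hab⟩
  have hu_eq : mstCost u = M.value :=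
    mstCost_eq_of_isSpanningTree hT hvalue.ge fun _ hT' => hvalue.trans_le <|
      sum_le_sum_of_card_connectedComponent_eq hcount (fun e _ => hu e) hT'.2.1 (fun e _ => hu e)
        fun _ _ a b hab _ hut => (thresholdGraph_adj.2 ⟨hut, hab⟩).reachable
  have hm_eq : mstCost m = M.value :=
    mstCost_eq_of_isSpanningTree hT (hvalue ▸ sum_le_sum fun e he => (hm_le e (hT.1 e he)).2)
      fun _ hT' => hvalue.trans_le <| sum_le_sum_of_card_connectedComponent_eq hcount
        (fun e _ => hu e) hT'.2.1 (fun e he => (hm_le e (hT'.1 e he)).1)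
        fun t ht a b hab _ hmt => (hreach t ht a b hab).1 (hm a b hab ▸ hmt)
  exact ⟨hm_eq.trans hu_eq.symm, hu_eq⟩
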